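/- For any integer m ≥ 3, the double integral over the region {0 ≤ x_2 ≤ x_1 ≤ 1} of (1-x_1)^{m-3}(1-x_2)^{m-3} x_1^2 x_2^2 (x_1 - x_2)^2 dx_2 dx_1 equals 12 / (m^2 (m^2-4)(m^2-1)^2). -/

import Mathlib

/-!
The integrand is `w(x₁) w(x₂) x₁² x₂² (x₁ - x₂)²` with `w(t) = (1 - t)^(m-3)`. It is symmetric
under `x₁ ↔ x₂` and the diagonal is null, so the integral over the triangle is half the integral
over the unit square. Expanding `(x₁ - x₂)²`, the square integral splits into products of moments
`Mⱼ = ∫₀¹ tʲ w(t) dt`, giving the Hankel determinant `M₂ M₄ - M₃²` for the triangle. The moments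
are Beta integrals `j! (m-3)! / (j+m-2)!`, and the determinant simplifies to the stated value.
-/

open MeasureTheory Set Nat

theorem integral_pow_mul_one_sub_pow (a b : ℕ) :
    ∫ x in (0:ℝ)..1, x ^ a * (1 - x) ^ b = (a ! * b ! : ℝ) / (a + b + 1)! := by
  induction b generalizing a with
  | zero =>
    simp only [pow_zero, mul_one, integral_pow, one_pow, zero_pow (succ_ne_zero a), sub_zero]
    push_cast [Nat.factorial_succ, Nat.factorial_zero]
    field_simp
  | succ b ih =>
    have hsplit : ∀ x : ℝ,
        x ^ a * (1 - x) ^ (b + 1) = x ^ a * (1 - x) ^ b - x ^ (a + 1) * (1 - x) ^ b :=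
      fun x => by ring
    simp_rw [hsplit]
    rw [intervalIntegral.integral_sub
        ((by fun_prop : Continuous fun x : ℝ => x ^ a * (1 - x) ^ b).intervalIntegrable _ _)
        ((by fun_prop : Continuous fun x : ℝ => x ^ (a + 1) * (1 - x) ^ b).intervalIntegrable _ _),
      ih, ih, show a + 1 + b + 1 = a + (b + 1) + 1 by ring]
    simp only [Nat.factorial_succ, Nat.add_succ]
    push_cast
    field_simp
    ring

theorem measure_prod_setOf_fst_eq_snd (μ ν : Measure ℝ) [SFinite ν] [NullSingletonClass ν] :
    μ.prod ν {p : ℝ × ℝ | p.1 = p.2} = 0 := by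
  rw [Measure.measure_prod_null (measurableSet_eq_fun measurable_fst measurable_snd)]
  filter_upwards with x
  simp [Set.preimage]

theorem setIntegral_Icc_prod_Icc_mul {a b c d : ℝ} (hab : a ≤ b) (hcd : c ≤ d) (f g : ℝ → ℝ) :
    ∫ p in Icc a b ×ˢ Icc c d, f p.1 * g p.2 = (∫ x in a..b, f x) * ∫ y in c..d, g y := by
  rw [Measure.volume_eq_prod, setIntegral_prod_mul, intervalIntegral.integral_of_le hab,
    intervalIntegral.integral_of_le hcd, integral_Icc_eq_integral_Ioc,
    integral_Icc_eq_integral_Ioc]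

theorem setIntegral_triangle_eq_half_of_swap {a b : ℝ} {f : ℝ × ℝ → ℝ}
    (hswap : ∀ p, f p.swap = f p) (hf : IntegrableOn f (Icc a b ×ˢ Icc a b)) :
    ∫ p in {q : ℝ × ℝ | a ≤ q.2 ∧ q.2 ≤ q.1 ∧ q.1 ≤ b}, f p
      = (∫ p in Icc a b ×ˢ Icc a b, f p) / 2 := by
  set S := {q : ℝ × ℝ | a ≤ q.2 ∧ q.2 ≤ q.1 ∧ q.1 ≤ b}
  have hS : MeasurableSet S :=
    (measurableSet_le measurable_const measurable_snd).inter
      ((measurableSet_le measurable_snd measurable_fst).inter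
        (measurableSet_le measurable_fst measurable_const))
  have hunion : S ∪ Prod.swap ⁻¹' S = Icc a b ×ˢ Icc a b := by
    ext ⟨x, y⟩
    simp only [S, mem_union, mem_preimage, Prod.swap_prod_mk, mem_ofPred_eq, mem_prod, mem_Icc]
    constructor
    · rintro (h | h) <;> refine ⟨⟨?_, ?_⟩, ?_, ?_⟩ <;> linarith
    · rintro ⟨⟨hx, hx'⟩, hy, hy'⟩
      rcases le_total y x with h | h
      exacts [Or.inl ⟨hy, h, hx'⟩, Or.inr ⟨hx, h, hy'⟩]
  have hdisj : AEDisjoint volume S (Prod.swap ⁻¹' S) :=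
    measure_mono_null (fun p hp => le_antisymm hp.2.2.1 hp.1.2.1)
      (measure_prod_setOf_fst_eq_snd volume volume)
  have hswapS : ∫ p in Prod.swap ⁻¹' S, f p = ∫ p in S, f p :=
    calc ∫ p in Prod.swap ⁻¹' S, f p = ∫ p in Prod.swap ⁻¹' S, f p.swap :=
          setIntegral_congr_fun (measurable_swap hS) fun p _ => (hswap p).symm
      _ = ∫ p in S, f p :=
          (Measure.measurePreserving_swap (μ := volume) (ν := volume)).setIntegral_preimage_emb
            MeasurableEquiv.prodComm.measurableEmbedding f S
  rw [← hunion, setIntegral_union₀ hdisj (measurable_swap hS).nullMeasurableSet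
    (hf.mono_set (hunion ▸ subset_union_left)) (hf.mono_set (hunion ▸ subset_union_right)),
    hswapS]
  ring

theorem setIntegral_Icc_prod_Icc_weighted_sq_sub {a b : ℝ} (hab : a ≤ b) {w : ℝ → ℝ}
    (hw : Continuous w) :
    ∫ p in Icc a b ×ˢ Icc a b, w p.1 * w p.2 * p.1 ^ 2 * p.2 ^ 2 * (p.1 - p.2) ^ 2
      = 2 * ((∫ x in a..b, x ^ 2 * w x) * (∫ x in a..b, x ^ 4 * w x)
        - (∫ x in a..b, x ^ 3 * w x) ^ 2) := by
  set g : ℕ → ℝ → ℝ := fun j x => x ^ j * w x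
  have hg : ∀ i j, IntegrableOn (fun p : ℝ × ℝ => g i p.1 * g j p.2) (Icc a b ×ˢ Icc a b) :=
    fun i j => (by fun_prop : Continuous fun p : ℝ × ℝ => g i p.1 * g j p.2).continuousOn
      |>.integrableOn_compact (isCompact_Icc.prod isCompact_Icc)
  have hexpand : (fun p : ℝ × ℝ => w p.1 * w p.2 * p.1 ^ 2 * p.2 ^ 2 * (p.1 - p.2) ^ 2)
      = fun p => g 4 p.1 * g 2 p.2 + g 2 p.1 * g 4 p.2 - 2 * (g 3 p.1 * g 3 p.2) := by
    ext p; simp only [g]; ring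
  rw [hexpand, integral_sub, integral_add, integral_const_mul]
  · rw [setIntegral_Icc_prod_Icc_mul hab hab (g 4), setIntegral_Icc_prod_Icc_mul hab hab (g 2),
      setIntegral_Icc_prod_Icc_mul hab hab (g 3)]
    ring
  exacts [hg 4 2, hg 2 4, (hg 4 2).add (hg 2 4), (hg 3 3).const_mul 2]

theorem setIntegral_triangle_weighted_sq_sub {a b : ℝ} (hab : a ≤ b) {w : ℝ → ℝ}
    (hw : Continuous w) :
    ∫ p in {q : ℝ × ℝ | a ≤ q.2 ∧ q.2 ≤ q.1 ∧ q.1 ≤ b},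
        w p.1 * w p.2 * p.1 ^ 2 * p.2 ^ 2 * (p.1 - p.2) ^ 2
      = (∫ x in a..b, x ^ 2 * w x) * (∫ x in a..b, x ^ 4 * w x)
        - (∫ x in a..b, x ^ 3 * w x) ^ 2 := by
  have hcont : Continuous fun p : ℝ × ℝ =>
      w p.1 * w p.2 * p.1 ^ 2 * p.2 ^ 2 * (p.1 - p.2) ^ 2 := by fun_prop
  rw [setIntegral_triangle_eq_half_of_swap
      (fun p => by simp only [Prod.fst_swap, Prod.snd_swap]; ring)
      (hcont.continuousOn.integrableOn_compact (isCompact_Icc.prod isCompact_Icc)),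
    setIntegral_Icc_prod_Icc_weighted_sq_sub hab hw]
  ring

/-- For any integer `m ≥ 3`, the double integral over `{0 ≤ x₂ ≤ x₁ ≤ 1}` of
`(1-x₁)^(m-3) (1-x₂)^(m-3) x₁² x₂² (x₁-x₂)²` equals `12/(m²(m²-4)(m²-1)²)`. -/
theorem double_integral_simplex (m : ℕ) (hm : 3 ≤ m) :
    ∫ p in {q : ℝ × ℝ | 0 ≤ q.2 ∧ q.2 ≤ q.1 ∧ q.1 ≤ 1},
        (1 - p.1) ^ (m - 3) * (1 - p.2) ^ (m - 3) * p.1 ^ 2 * p.2 ^ 2 * (p.1 - p.2) ^ 2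
      = 12 / ((m : ℝ) ^ 2 * ((m : ℝ) ^ 2 - 4) * ((m : ℝ) ^ 2 - 1) ^ 2) := by
  obtain ⟨k, rfl⟩ := Nat.exists_eq_add_of_le' hm
  rw [Nat.add_sub_cancel,
    setIntegral_triangle_weighted_sq_sub zero_le_one (w := fun t => (1 - t) ^ k) (by fun_prop)]
  have hm4 : ((k + 3 : ℕ) : ℝ) ^ 2 - 4 = (k + 1) * (k + 5) := by push_cast; ring
  have hm1 : ((k + 3 : ℕ) : ℝ) ^ 2 - 1 = (k + 2) * (k + 4) := by push_cast; ring
  rw [hm4, hm1]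
  simp only [integral_pow_mul_one_sub_pow, Nat.add_comm _ k, Nat.factorial_succ]
  push_cast
  field_simp
  ring
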